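/- The map f : H → H^A is Borel measurable and is a Z-approximate homomorphism, i.e., for all x, y ∈ H the set {a ∈ A : f_a(x) ⊕ f_a(y) ≠ f_a(x ⊕ y)} belongs to Z. -/

import Mathlib

open Pointwise

/-- A rational ball: a set of the form `{x | d(c,x) < ε}` with center `c ∈ D`
and positive rational radius `ε`. -/
def IsRationalBall {H : Type*} [MetricSpace H] (D : Set H) (B : Set H) : Prop :=
  ∃ c ∈ D, ∃ ε : ℚ, 0 < ε ∧ B = {x : H | dist c x < (ε : ℝ)}

/-- Property (*): any finite system of linear equations with integer coefficients and
constants in `D` that has a solution in given closed rational balls centered in `D`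
also has a solution in `D` inside the same balls. -/
def PropertyStar {H : Type*} [MetricSpace H] [AddCommGroup H] (D : AddSubgroup H) : Prop :=
  ∀ n : ℕ, 1 ≤ n → ∀ c : Fin n → H, (∀ i, c i ∈ D) → ∀ ε : ℚ, 0 < ε →
    ∀ P : Finset ((Fin n → ℤ) × H), (∀ p ∈ P, p.2 ∈ D) →
    (∃ x : Fin n → H, (∀ i, dist (x i) (c i) ≤ (ε : ℝ)) ∧
      ∀ p ∈ P, ∑ i, p.1 i • x i = p.2) →
    ∃ x : Fin n → H, (∀ i, x i ∈ D ∧ dist (x i) (c i) ≤ (ε : ℝ)) ∧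
      ∀ p ∈ P, ∑ i, p.1 i • x i = p.2

/-- The index set `A`: tuples of pairwise disjoint nonempty rational balls whose union is
a nonempty proper subset of `H`, together with points `r i ∈ U i ∩ D` satisfying the
coherence condition of Definition 3.1. -/
structure IndexElem (H : Type*) [MetricSpace H] [AddCommGroup H] (D : AddSubgroup H) where
  n : ℕ
  U : Fin n → Set H
  r : Fin n → H
  isBall : ∀ i, IsRationalBall (D : Set H) (U i)
  ballNe : ∀ i, (U i).Nonempty
  disj : ∀ i j, i ≠ j → Disjoint (U i) (U j)
  unionNe : (⋃ i, U i).Nonempty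
  proper : (⋃ i, U i) ≠ Set.univ
  rMemU : ∀ i, r i ∈ U i
  rMemD : ∀ i, r i ∈ D
  cond : ∀ i j : Fin n,
    (∃ k, r i + r j = r k ∧ (U i + U j) ∩ (⋃ l, U l) ⊆ U k) ∨
    (U i + U j) ∩ (⋃ l, U l) = ∅

/-- `U^a`, the union of the balls of `a`. -/
def UA {H : Type*} [MetricSpace H] [AddCommGroup H] {D : AddSubgroup H}
    (a : IndexElem H D) : Set H := ⋃ i, a.U i

/-- The ideal `Z`: sets `X ⊆ A` for which some finite `u ⊆ H` satisfies `u ⊄ U^a`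
for all `a ∈ X`. -/
def Zid {H : Type*} [MetricSpace H] [AddCommGroup H] (D : AddSubgroup H) :
    Set (Set (IndexElem H D)) :=
  {X | ∃ u : Set H, u.Finite ∧ ∀ a ∈ X, ¬ u ⊆ UA a}

/-- The coordinate maps `f_a`: `f_a x = x - r^a_i` if `x ∈ U^a_i`, and `0` if `x ∉ U^a`. -/
noncomputable def fmap {H : Type*} [MetricSpace H] [AddCommGroup H] {D : AddSubgroup H}
    (a : IndexElem H D) (x : H) : H :=
  letI := Classical.dec (∃ i, x ∈ a.U i)
  if h : ∃ i, x ∈ a.U i then x - a.r h.choose else 0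

/-! On each ball `U^a_i` the map `f_a` is the translation `x ↦ x - r^a_i`, so it is Borel.
If `x`, `y` and `x + y` all lie in `U^a`, say `x ∈ U^a_i` and `y ∈ U^a_j`, the coherence condition
puts `x + y` in a ball `U^a_k` with `r^a_i + r^a_j = r^a_k`, so `f_a` is additive on `x, y`.
Hence `{x, y, x + y}` witnesses that the failure set lies in `Z`. -/

theorem measurable_of_eqOn_cover {α β ι : Type*} [MeasurableSpace α] [MeasurableSpace β]
    [Countable ι] {t : ι → Set α} (ht : ∀ i, MeasurableSet (t i)) (hcover : ∀ x, ∃ i, x ∈ t i)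
    {g : ι → α → β} (hg : ∀ i, Measurable (g i)) {f : α → β} (hf : ∀ i, Set.EqOn f (g i) (t i)) :
    Measurable f := by
  intro V hV
  have hpre : f ⁻¹' V = ⋃ i, t i ∩ g i ⁻¹' V := by
    ext x
    simp only [Set.mem_preimage, Set.mem_iUnion, Set.mem_inter_iff]
    constructor
    · intro hx
      obtain ⟨i, hi⟩ := hcover x
      exact ⟨i, hi, hf i hi ▸ hx⟩
    · rintro ⟨i, hi, hx⟩
      exact (hf i hi).symm ▸ hx
  rw [hpre]
  exact .iUnion fun i => (ht i).inter (hg i hV)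

theorem IsRationalBall.isOpen {H : Type*} [MetricSpace H] {D B : Set H} (hB : IsRationalBall D B) :
    IsOpen B := by
  obtain ⟨c, -, ε, -, rfl⟩ := hB
  exact isOpen_lt (continuous_const.dist continuous_id) continuous_const

namespace IndexElem

variable {H : Type*} [MetricSpace H] [AddCommGroup H] {D : AddSubgroup H}

theorem fmap_eq_sub_of_mem (a : IndexElem H D) {x : H} {i : Fin a.n} (hx : x ∈ a.U i) :
    fmap a x = x - a.r i := by
  have h : ∃ j, x ∈ a.U j := ⟨i, hx⟩
  have hi : h.choose = i := by
    by_contra hne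
    exact (a.disj _ _ hne).ne_of_mem h.choose_spec hx rfl
  rw [fmap, dif_pos h, hi]

theorem fmap_eq_zero_of_notMem (a : IndexElem H D) {x : H} (hx : x ∉ UA a) : fmap a x = 0 :=
  dif_neg (by simpa [UA] using hx)

theorem measurable_fmap [ContinuousSub H] [MeasurableSpace H] [BorelSpace H]
    (a : IndexElem H D) : Measurable (fmap a) := by
  refine measurable_of_eqOn_cover (t := fun o : Option (Fin a.n) => o.elim (UA a)ᶜ a.U)
    (g := fun o : Option (Fin a.n) => o.elim 0 fun i => (· - a.r i)) ?_ ?_ ?_ ?_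
  · rintro (_ | i)
    · exact (MeasurableSet.iUnion fun i => (a.isBall i).isOpen.measurableSet).compl
    · exact (a.isBall i).isOpen.measurableSet
  · intro x
    by_cases hx : x ∈ UA a
    · obtain ⟨i, hi⟩ := Set.mem_iUnion.mp hx
      exact ⟨some i, hi⟩
    · exact ⟨none, hx⟩
  · rintro (_ | i)
    · exact measurable_const
    · exact (continuous_sub_right (a.r i)).measurable
  · rintro (_ | i) x hx
    · exact a.fmap_eq_zero_of_notMem hx
    · exact a.fmap_eq_sub_of_mem hx

theorem fmap_add_of_mem_UA (a : IndexElem H D) {x y : H} (hx : x ∈ UA a) (hy : y ∈ UA a)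
    (hxy : x + y ∈ UA a) : fmap a x + fmap a y = fmap a (x + y) := by
  obtain ⟨i, hxi⟩ := Set.mem_iUnion.mp hx
  obtain ⟨j, hyj⟩ := Set.mem_iUnion.mp hy
  have hsum : x + y ∈ (a.U i + a.U j) ∩ UA a := ⟨Set.add_mem_add hxi hyj, hxy⟩
  rcases a.cond i j with ⟨k, hrk, hUk⟩ | hempty
  · rw [fmap_eq_sub_of_mem a hxi, fmap_eq_sub_of_mem a hyj, fmap_eq_sub_of_mem a (hUk hsum), ← hrk]
    abel
  · exact absurd hsum (hempty ▸ Set.notMem_empty _)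

end IndexElem

theorem fmap_borel_approx_hom_general {H : Type*} [MetricSpace H]
    [AddCommGroup H] [IsTopologicalAddGroup H]
    (D : AddSubgroup H) [MeasurableSpace H] [BorelSpace H] :
    Measurable (fun x : H => fun a : IndexElem H D => fmap a x) ∧
    ∀ x y : H, {a : IndexElem H D | fmap a x + fmap a y ≠ fmap a (x + y)} ∈ Zid D := by
  refine ⟨measurable_pi_lambda _ IndexElem.measurable_fmap, fun x y => ?_⟩
  refine ⟨{x, y, x + y}, by simp, fun a hfail hsub => hfail ?_⟩
  exact a.fmap_add_of_mem_UA (hsub (by simp)) (hsub (by simp)) (hsub (by simp))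

theorem fmap_borel_approx_hom {H : Type*} [MetricSpace H] [CompleteSpace H] [TopologicalSpace.SeparableSpace H]
    [AddCommGroup H] [IsTopologicalAddGroup H] [Uncountable H]
    (D : AddSubgroup H) (hDcount : (D : Set H).Countable) (hDdense : Dense (D : Set H))
    (hstar : PropertyStar D) [MeasurableSpace H] [BorelSpace H] :
    Measurable (fun x : H => fun a : IndexElem H D => fmap a x) ∧
    ∀ x y : H, {a : IndexElem H D | fmap a x + fmap a y ≠ fmap a (x + y)} ∈ Zid D :=
  fmap_borel_approx_hom_general D
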